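/- For Z in the Siegel upper half space ℍ₂ define y₀ = θ[(0,0),(1,1)](Z)⁴, y₁ = θ[(0,0),(0,1)](Z)⁴, y₂ = θ[(0,0),(0,0)](Z)⁴, y₃ = −θ[(1,0),(0,0)](Z)⁴ − θ[(0,0),(1,1)](Z)⁴, y₄ = −θ[(1,0),(0,1)](Z)⁴ − θ[(0,0),(1,1)](Z)⁴. Then for every Z ∈ ℍ₂ the quartic relation (y₀y₁ + y₀y₂ + y₁y₂ − y₃y₄)² = 4·y₀y₁y₂·(y₀ + y₁ + y₂ + y₃ + y₄) holds. -/

import Mathlib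

open Matrix Complex

/-- The Siegel upper half space of genus 2: symmetric complex 2×2 matrices with
positive definite imaginary part. -/
def SiegelH2 : Set (Matrix (Fin 2) (Fin 2) ℂ) :=
  {Z | Z.IsSymm ∧ (Matrix.of fun i j => (Z i j).im).PosDef}

/-- The summand of the theta series with characteristic `(a,b)`:
`exp(πi((g+a/2)ᵀ Z (g+a/2) + bᵀ(g+a/2)))`. -/
noncomputable def thetaTerm (a b : Fin 2 → ℤ) (Z : Matrix (Fin 2) (Fin 2) ℂ)
    (g : Fin 2 → ℤ) : ℂ :=
  Complex.exp (Real.pi * Complex.I *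
    ((∑ i, ∑ j, ((g i : ℂ) + (a i : ℂ) / 2) * Z i j * ((g j : ℂ) + (a j : ℂ) / 2)) +
      ∑ i, (b i : ℂ) * ((g i : ℂ) + (a i : ℂ) / 2)))

/-- The theta constant `θ[a,b](Z) = Σ_{g∈ℤ²} exp(πi((g+a/2)ᵀ Z (g+a/2) + bᵀ(g+a/2)))`. -/
noncomputable def theta (a b : Fin 2 → ℤ) (Z : Matrix (Fin 2) (Fin 2) ℂ) : ℂ :=
  ∑' g : Fin 2 → ℤ, thetaTerm a b Z g

/-- `y₀ = θ[(0,0),(1,1)]⁴`. -/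
noncomputable def yg (Z : Matrix (Fin 2) (Fin 2) ℂ) : Fin 5 → ℂ :=
  ![theta ![0, 0] ![1, 1] Z ^ 4,
    theta ![0, 0] ![0, 1] Z ^ 4,
    theta ![0, 0] ![0, 0] Z ^ 4,
    -theta ![1, 0] ![0, 0] Z ^ 4 - theta ![0, 0] ![1, 1] Z ^ 4,
    -theta ![1, 0] ![0, 1] Z ^ 4 - theta ![0, 0] ![1, 1] Z ^ 4]


/-!
Writing a pair of lattice points as `(p + q + σ, p - q)` with `σ ∈ {0,1}²` turns the square
of a theta series into a sum of products of second order theta constants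
`Θ[c](Z) = θ[c,0](2Z)`:
`θ[a,b](Z)² = Σ_σ (-1)^((σ+a)·b) Θ[σ+a](Z) Θ[σ](Z)`, where `Θ[c]` only depends on `c mod 2`.
This writes the squares of the five theta constants in `y₀,…,y₄` as quadratic forms in the four
values `Θ[00], Θ[01], Θ[10], Θ[11]`, and Igusa's quartic becomes a polynomial identity in them.
The rearrangements are justified by absolute convergence: since `Im Z` is positive definite, the
terms are dominated by a product of two one-dimensional Gaussian sums.
-/

def Int.halfSumDiffEquiv : Fin 2 × ℤ × ℤ ≃ ℤ × ℤ where
  toFun x := (x.2.1 + x.2.2 + x.1, x.2.1 - x.2.2)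
  invFun y := (⟨((y.1 - y.2) % 2).toNat, by omega⟩,
    (y.1 + y.2 - (y.1 - y.2) % 2) / 2, (y.1 - y.2 - (y.1 - y.2) % 2) / 2)
  left_inv := by
    rintro ⟨⟨s, hs⟩, p, q⟩
    refine Prod.ext (Fin.ext ?_) (Prod.ext ?_ ?_) <;> dsimp only <;> omega
  right_inv := by
    rintro ⟨g, h⟩
    refine Prod.ext ?_ ?_ <;> dsimp only <;> omega

def halfSumDiffEquiv (ι : Type*) : (ι → Fin 2) × (ι → ℤ) × (ι → ℤ) ≃ (ι → ℤ) × (ι → ℤ) :=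
  ((Equiv.arrowProdEquivProdArrow _ _ _).trans
    (Equiv.prodCongr (Equiv.refl _) (Equiv.arrowProdEquivProdArrow _ _ _))).symm.trans
    ((Equiv.piCongrRight fun _ => Int.halfSumDiffEquiv).trans
      (Equiv.arrowProdEquivProdArrow _ _ _))

lemma halfSumDiffEquiv_apply {ι : Type*} (x : (ι → Fin 2) × (ι → ℤ) × (ι → ℤ)) :
    halfSumDiffEquiv ι x = (x.2.1 + x.2.2 + fun i => (x.1 i : ℤ), x.2.1 - x.2.2) :=
  rfl

lemma Real.summable_exp_neg_mul_int_add_sq {t : ℝ} (ht : 0 < t) (c : ℝ) :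
    Summable fun n : ℤ => Real.exp (-t * (n + c) ^ 2) := by
  refine (HurwitzKernelBounds.summable_f_int 0 c (div_pos ht Real.pi_pos)).congr fun n => ?_
  simp only [HurwitzKernelBounds.f_int, pow_zero, one_mul]
  congr 1
  field_simp

lemma Matrix.PosDef.exists_pos_mul_sum_sq_le {n : Type*} [Fintype n] {M : Matrix n n ℝ}
    (hM : M.PosDef) : ∃ ε > 0, ∀ x : n → ℝ, ε * ∑ i, x i ^ 2 ≤ x ⬝ᵥ M *ᵥ x := by
  rcases isEmpty_or_nonempty n with hn | hn
  · exact ⟨1, one_pos, fun x => by simp⟩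
  obtain ⟨u₀, hu₀, hmin⟩ := (isCompact_sphere (0 : n → ℝ) 1).exists_isMinOn
    (NormedSpace.sphere_nonempty.mpr zero_le_one)
    (by fun_prop : Continuous fun x : n → ℝ => x ⬝ᵥ M *ᵥ x).continuousOn
  set m := u₀ ⬝ᵥ M *ᵥ u₀
  have hm : 0 < m := hM.dotProduct_mulVec_pos (ne_zero_of_mem_unit_sphere ⟨u₀, hu₀⟩)
  refine ⟨m / Fintype.card n, by positivity, fun x => ?_⟩
  rcases eq_or_ne x 0 with rfl | hx
  · simp
  have hsum : ∑ i, x i ^ 2 ≤ Fintype.card n * ‖x‖ ^ 2 :=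
    calc ∑ i, x i ^ 2 ≤ ∑ _i : n, ‖x‖ ^ 2 := Finset.sum_le_sum fun i _ => by
          simpa [Real.norm_eq_abs] using pow_le_pow_left₀ (norm_nonneg _) (norm_le_pi_norm x i) 2
      _ = Fintype.card n * ‖x‖ ^ 2 := by simp
  have hx' : 0 < ‖x‖ := norm_pos_iff.mpr hx
  have hu : ‖x‖⁻¹ • x ∈ Metric.sphere (0 : n → ℝ) 1 := by
    simp [norm_smul, hx'.ne']
  have hscale : x ⬝ᵥ M *ᵥ x = ‖x‖ ^ 2 * ((‖x‖⁻¹ • x) ⬝ᵥ M *ᵥ (‖x‖⁻¹ • x)) := by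
    simp only [mulVec_smul, dotProduct_smul, smul_dotProduct, smul_eq_mul]
    field_simp
  calc m / Fintype.card n * ∑ i, x i ^ 2
      ≤ m / Fintype.card n * (Fintype.card n * ‖x‖ ^ 2) := by gcongr
    _ = ‖x‖ ^ 2 * m := by field_simp
    _ ≤ x ⬝ᵥ M *ᵥ x := by rw [hscale]; exact mul_le_mul_of_nonneg_left (hmin hu) (by positivity)

lemma posDef_im_smul {n : Type*} [Fintype n] {Z : Matrix n n ℂ}
    (hY : (of fun i j => (Z i j).im).PosDef) {r : ℝ} (hr : 0 < r) :
    (of fun i j => (((r : ℂ) • Z) i j).im).PosDef := by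
  convert hY.smul hr using 1
  ext i j
  simp

lemma norm_thetaTerm (a b : Fin 2 → ℤ) (Z : Matrix (Fin 2) (Fin 2) ℂ) (g : Fin 2 → ℤ) :
    ‖thetaTerm a b Z g‖ = Real.exp (-Real.pi *
      ((fun i => (g i : ℝ) + a i / 2) ⬝ᵥ (of fun i j => (Z i j).im) *ᵥ
        fun i => (g i : ℝ) + a i / 2)) := by
  have hx : ∀ i, (g i : ℂ) + (a i : ℂ) / 2 = (((g i : ℝ) + a i / 2 : ℝ) : ℂ) := fun i => by
    push_cast; rfl
  rw [thetaTerm, Complex.norm_exp, Real.exp_eq_exp]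
  simp only [hx, Fin.sum_univ_two, dotProduct, mulVec, of_apply]
  simp only [Complex.add_re, Complex.add_im, Complex.mul_re, Complex.mul_im, Complex.ofReal_re,
    Complex.ofReal_im, Complex.I_re, Complex.I_im, Complex.intCast_re, Complex.intCast_im]
  ring

lemma summable_norm_thetaTerm {Z : Matrix (Fin 2) (Fin 2) ℂ}
    (hY : (of fun i j => (Z i j).im).PosDef) (a b : Fin 2 → ℤ) :
    Summable fun g => ‖thetaTerm a b Z g‖ := by
  obtain ⟨ε, hε, hbound⟩ := hY.exists_pos_mul_sum_sq_le
  have hπε : 0 < Real.pi * ε := by positivity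
  have hprod := (Real.summable_exp_neg_mul_int_add_sq hπε (a 0 / 2)).mul_of_nonneg
    (Real.summable_exp_neg_mul_int_add_sq hπε (a 1 / 2)) (fun _ => (Real.exp_pos _).le)
    (fun _ => (Real.exp_pos _).le)
  refine (finTwoArrowEquiv ℤ).symm.summable_iff.mp
    (hprod.of_nonneg_of_le (fun _ => norm_nonneg _) fun n => ?_)
  rw [Function.comp_apply, norm_thetaTerm, ← Real.exp_add, Real.exp_le_exp]
  have := hbound fun i => (((finTwoArrowEquiv ℤ).symm n i : ℤ) : ℝ) + a i / 2
  simp only [Fin.sum_univ_two] at this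
  simp only [finTwoArrowEquiv_symm_apply, Matrix.cons_val_zero, Matrix.cons_val_one] at this ⊢
  nlinarith [Real.pi_pos]

lemma thetaTerm_mul_thetaTerm {Z : Matrix (Fin 2) (Fin 2) ℂ} (hZ : Z.IsSymm)
    (a b s p q : Fin 2 → ℤ) :
    thetaTerm a b Z (p + q + s) * thetaTerm a b Z (p - q) =
      (-1) ^ (∑ i, (s i + a i) * b i) *
        (thetaTerm (s + a) 0 ((2 : ℂ) • Z) p * thetaTerm s 0 ((2 : ℂ) • Z) q) := by
  rw [← Complex.exp_pi_mul_I, ← Complex.exp_int_mul]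
  simp only [thetaTerm, ← Complex.exp_add]
  refine Complex.exp_eq_exp_iff_exists_int.mpr ⟨∑ i, b i * p i, ?_⟩
  simp only [Fin.sum_univ_two, Pi.add_apply, Pi.sub_apply, Pi.zero_apply, Matrix.smul_apply,
    smul_eq_mul, Int.cast_add, Int.cast_sub, Int.cast_mul, Int.cast_zero, hZ.apply 0 1]
  ring

lemma theta_sq {Z : Matrix (Fin 2) (Fin 2) ℂ} (hZ : Z.IsSymm)
    (hY : (of fun i j => (Z i j).im).PosDef) (a b : Fin 2 → ℤ) :
    theta a b Z ^ 2 = ∑ σ : Fin 2 → Fin 2,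
      (-1) ^ (∑ i, ((σ i : ℤ) + a i) * b i) *
        (theta ((fun i => (σ i : ℤ)) + a) 0 ((2 : ℂ) • Z) *
          theta (fun i => (σ i : ℤ)) 0 ((2 : ℂ) • Z)) := by
  have hY2 := posDef_im_smul hY two_pos
  rw [Complex.ofReal_ofNat] at hY2
  have hsum := summable_mul_of_summable_norm (summable_norm_thetaTerm hY a b)
    (summable_norm_thetaTerm hY a b)
  have hsum' : Summable fun x => thetaTerm a b Z (halfSumDiffEquiv _ x).1 *
      thetaTerm a b Z (halfSumDiffEquiv _ x).2 :=
    (halfSumDiffEquiv (Fin 2)).summable_iff.mpr hsum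
  rw [sq, theta, tsum_mul_tsum_of_summable_norm (summable_norm_thetaTerm hY a b)
    (summable_norm_thetaTerm hY a b), ← (halfSumDiffEquiv (Fin 2)).tsum_eq,
    hsum'.tsum_prod' fun σ => hsum'.prod_factor σ, tsum_fintype]
  refine Finset.sum_congr rfl fun σ _ => ?_
  simp only [halfSumDiffEquiv_apply, thetaTerm_mul_thetaTerm hZ, tsum_mul_left]
  rw [theta, theta, tsum_mul_tsum_of_summable_norm (summable_norm_thetaTerm hY2 _ _)
    (summable_norm_thetaTerm hY2 _ _)]

lemma theta_zero_congr {c c' : Fin 2 → ℤ} (h : ∀ i, c i ≡ c' i [ZMOD 2])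
    (Z : Matrix (Fin 2) (Fin 2) ℂ) : theta c 0 Z = theta c' 0 Z := by
  obtain ⟨k, hk⟩ : ∃ k : Fin 2 → ℤ, ∀ i, c i = c' i + 2 * k i :=
    ⟨fun i => (c i - c' i) / 2, fun i => by have := (h i).symm.dvd; dsimp only; omega⟩
  rw [theta, theta, ← (Equiv.addRight k).tsum_eq (thetaTerm c' 0 Z)]
  refine tsum_congr fun g => ?_
  simp only [thetaTerm, Fin.sum_univ_two, Equiv.coe_addRight, Pi.add_apply, Pi.zero_apply, hk]
  congr 1
  push_cast
  ring

/-- Igusa's quartic relation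
`(y₀y₁+y₀y₂+y₁y₂−y₃y₄)² = 4y₀y₁y₂(y₀+y₁+y₂+y₃+y₄)` among the five weight-two
generators `y₀,…,y₄` holds at every `Z ∈ ℍ₂`. -/
theorem stmt_10 (Z : Matrix (Fin 2) (Fin 2) ℂ) (hZ : Z ∈ SiegelH2) :
    (yg Z 0 * yg Z 1 + yg Z 0 * yg Z 2 + yg Z 1 * yg Z 2 - yg Z 3 * yg Z 4) ^ 2 =
      4 * (yg Z 0 * yg Z 1 * yg Z 2) * (yg Z 0 + yg Z 1 + yg Z 2 + yg Z 3 + yg Z 4) := by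
  have hlift : ∀ i j : Fin 2,
      (fun k => (((![i, j] : Fin 2 → Fin 2) k : ℕ) : ℤ)) = ![(i : ℤ), (j : ℤ)] := by
    intro i j
    funext k
    fin_cases k <;> rfl
  have h20 : theta ![2, 0] 0 ((2 : ℂ) • Z) = theta ![0, 0] 0 ((2 : ℂ) • Z) :=
    theta_zero_congr (by decide) _
  have h21 : theta ![2, 1] 0 ((2 : ℂ) • Z) = theta ![0, 1] 0 ((2 : ℂ) • Z) :=
    theta_zero_congr (by decide) _
  have hpow : ∀ t : ℂ, t ^ 4 = (t ^ 2) ^ 2 := fun t => by ring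
  simp only [yg, Matrix.cons_val_zero, Matrix.cons_val_one, Matrix.cons_val_two,
    Matrix.cons_val_three, Matrix.cons_val_four, Matrix.head_cons, Matrix.tail_cons, hpow,
    theta_sq hZ.1 hZ.2, ← (finTwoArrowEquiv _).symm.sum_comp, Fintype.sum_prod_type,
    Fin.sum_univ_two, finTwoArrowEquiv_symm_apply, hlift]
  norm_num [h20, h21]
  ring
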